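/- Let H = h + λ·1_Λ with h ∈ C²(𝕋^d), λ ∈ ℝ, and ∇h(u) = -λζ(u) on ∂Λ. Suppose x/N ∈ Λ, (x-e_j)/N ∈ Λ, (x+e_j)/N ∈ Λ^∁, and the boundary crossing rate is ξ^N_{x,x+e_j} = |ζ_{x,j}·e_j|/N while ξ^N_{x,x-e_j} = 1. Then N ξ^N_{x,x+e_j}(H((x+e_j)/N) - H(x/N)) + N ξ^N_{x,x-e_j}(H((x-e_j)/N) - H(x/N)) converges to -λ ζ(u)·e_j - ∂h/∂u_j(u) = 0 as N → ∞, where u ∈ ∂Λ ∩ [x/N, (x+e_j)/N] and x/N → u. -/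

import Mathlib

/-!
On the boundary edge the rate `|ζ_{x,j} · e_j| / N` absorbs the factor `N`, and the jump of `H`
tends to `-λ` because `h` is continuous while the indicator drops from `1` to `0`; the sign
condition turns `|ζ(u) · e_j| (-λ)` into `-λ ζ(u) · e_j`. On the interior edge the indicator
cancels and `N (h(p_N - e_j/N) - h(p_N))` is a difference quotient of `h` at the moving base
point `p_N → u`, which converges to `-∂_j h(u)` because a `C¹` function is strictly
differentiable. The boundary condition `∇h(u) = -λ ζ(u)` makes the sum of the limits vanish.
-/

open Filter Topology Asymptotics
open scoped RealInnerProductSpace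

theorem HasStrictFDerivAt.tendsto_inv_smul_sub_of_tendsto {𝕜 E F α : Type*}
    [NontriviallyNormedField 𝕜] [NormedAddCommGroup E] [NormedSpace 𝕜 E]
    [NormedAddCommGroup F] [NormedSpace 𝕜 F] {f : E → F} {f' : E →L[𝕜] F} {u : E}
    (hf : HasStrictFDerivAt f f' u) {l : Filter α} {x : α → E} {t : α → 𝕜}
    (hx : Tendsto x l (𝓝 u)) (ht : Tendsto t l (𝓝[≠] 0)) (v : E) :
    Tendsto (fun a => (t a)⁻¹ • (f (x a + t a • v) - f (x a))) l (𝓝 (f' v)) := by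
  obtain ⟨ht0, ht_ne⟩ := tendsto_nhdsWithin_iff.1 ht
  have hstep : Tendsto (fun a => (x a + t a • v, x a)) l (𝓝 (u, u)) :=
    .prodMk_nhds (by simpa using hx.add (ht0.smul_const v)) hx
  have hrem : (fun a => f (x a + t a • v) - f (x a) - t a • f' v) =o[l] t := by
    have hsmall := hf.isLittleO.comp_tendsto hstep
    simp only [Function.comp_def, add_sub_cancel_left, map_smul] at hsmall
    exact hsmall.trans_isBigO (isBigO_of_le' (c := ‖v‖) l fun a => by rw [norm_smul, mul_comm])
  have hlim := hrem.tendsto_inv_smul_nhds_zero.add_const (f' v)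
  rw [zero_add] at hlim
  refine hlim.congr' ?_
  filter_upwards [ht_ne] with a ha
  rw [smul_sub, inv_smul_smul₀ ha, sub_add_cancel]

theorem tendsto_inv_natCast_nhdsNE_zero {𝕜 : Type*} [Field 𝕜] [LinearOrder 𝕜]
    [IsStrictOrderedRing 𝕜] [Archimedean 𝕜] [TopologicalSpace 𝕜] [OrderTopology 𝕜] :
    Tendsto (fun N : ℕ => (N : 𝕜)⁻¹) atTop (𝓝[≠] 0) :=
  (tendsto_inv_atTop_nhdsGT_zero.comp tendsto_natCast_atTop_atTop).mono_right
    (nhdsWithin_mono _ fun _ hx => ne_of_gt hx)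

theorem stmt13_general (d : ℕ) (j : Fin d)
    (Λ : Set (EuclideanSpace ℝ (Fin d)))
    (ζ : EuclideanSpace ℝ (Fin d) → EuclideanSpace ℝ (Fin d))
    (h : EuclideanSpace ℝ (Fin d) → ℝ) (lam : ℝ)
    (hh : ContDiff ℝ 2 h)
    (u : EuclideanSpace ℝ (Fin d))
    (hbc : ∀ v, fderiv ℝ h u v = -lam * ⟪ζ u, v⟫)
    (hsgn : 0 ≤ ⟪ζ u, EuclideanSpace.single j (1 : ℝ)⟫)
    (p ζN : ℕ → EuclideanSpace ℝ (Fin d))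
    (hp : Tendsto p atTop (nhds u))
    (hζN : Tendsto ζN atTop (nhds (ζ u)))
    (hin : ∀ N : ℕ, 1 ≤ N →
      p N ∈ Λ ∧
      p N - ((N : ℝ))⁻¹ • EuclideanSpace.single j (1 : ℝ) ∈ Λ ∧
      p N + ((N : ℝ))⁻¹ • EuclideanSpace.single j (1 : ℝ) ∉ Λ) :
    let H : EuclideanSpace ℝ (Fin d) → ℝ :=
      fun v => h v + lam * Set.indicator Λ (fun _ => (1 : ℝ)) v
    let ej : EuclideanSpace ℝ (Fin d) := EuclideanSpace.single j (1 : ℝ)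
    Tendsto (fun N : ℕ =>
        (N : ℝ) * (|⟪ζN N, ej⟫| / N) * (H (p N + ((N : ℝ))⁻¹ • ej) - H (p N)) +
        (N : ℝ) * 1 * (H (p N - ((N : ℝ))⁻¹ • ej) - H (p N)))
      atTop (nhds (-lam * ⟪ζ u, ej⟫ - fderiv ℝ h u ej)) ∧
    -lam * ⟪ζ u, ej⟫ - fderiv ℝ h u ej = 0 := by
  intro H ej
  have hjump : Tendsto
      (fun N : ℕ => |⟪ζN N, ej⟫| * (h (p N + ((N : ℝ))⁻¹ • ej) - h (p N) - lam))
      atTop (𝓝 (-lam * ⟪ζ u, ej⟫)) := by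
    have hnext : Tendsto (fun N : ℕ => p N + ((N : ℝ))⁻¹ • ej) atTop (𝓝 u) := by
      simpa using hp.add ((tendsto_inv_atTop_nhds_zero_nat (𝕜 := ℝ)).smul_const ej)
    have hcont := hh.continuous.tendsto u
    have hlim := (hζN.inner (tendsto_const_nhds (x := ej))).abs.mul
      (((hcont.comp hnext).sub (hcont.comp hp)).sub_const lam)
    have hsgn_ej : 0 ≤ ⟪ζ u, ej⟫ := hsgn
    simp only [Function.comp_def, sub_self, zero_sub, abs_of_nonneg hsgn_ej] at hlim
    convert hlim using 2
    ring
  have hinterior : Tendsto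
      (fun N : ℕ => ((N : ℝ))⁻¹⁻¹ • (h (p N + ((N : ℝ))⁻¹ • -ej) - h (p N)))
      atTop (𝓝 (-fderiv ℝ h u ej)) := by
    simpa using (hh.hasStrictFDerivAt (x := u) two_ne_zero).tendsto_inv_smul_sub_of_tendsto
      hp tendsto_inv_natCast_nhdsNE_zero (-ej)
  refine ⟨?_, by rw [hbc ej]; ring⟩
  rw [sub_eq_add_neg]
  refine (hjump.add hinterior).congr' ?_
  filter_upwards [eventually_ge_atTop 1] with N hN
  obtain ⟨hpΛ, hprevΛ, hnextΛ⟩ := hin N hN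
  simp only [H, ej, Set.indicator_of_mem hpΛ, Set.indicator_of_mem hprevΛ,
    Set.indicator_of_notMem hnextΛ, smul_neg, ← sub_eq_add_neg, inv_inv, smul_eq_mul]
  field_simp
  ring

/-- let `H = h + λ·1_Λ` with `h ∈ C²`, `∇h(u) = -λζ(u)` on `∂Λ`.
For lattice points `p N ∈ Λ` with `p N - e_j/N ∈ Λ`, `p N + e_j/N ∉ Λ`
(`p N → u ∈ ∂Λ`), boundary crossing rate `ξ^N_{x,x+e_j} = |ζ_{x,j}·e_j|/N`
(with `ζ_{x,j} = ζN N → ζ(u)`) and interior rate `ξ^N_{x,x-e_j} = 1`, the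
combination
`N ξ^N_{x,x+e_j}(H(p+e_j/N) - H(p)) + N ξ^N_{x,x-e_j}(H(p-e_j/N) - H(p))`
converges to `-λ ζ(u)·e_j - ∂h/∂u_j(u)`, which is `0` by the boundary
condition. -/
theorem stmt13 (d : ℕ) (j : Fin d)
    (Λ : Set (EuclideanSpace ℝ (Fin d)))
    (ζ : EuclideanSpace ℝ (Fin d) → EuclideanSpace ℝ (Fin d))
    (h : EuclideanSpace ℝ (Fin d) → ℝ) (lam : ℝ)
    (hh : ContDiff ℝ 2 h)
    (u : EuclideanSpace ℝ (Fin d)) (hu : u ∈ frontier Λ)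
    (hbc : ∀ v, fderiv ℝ h u v = -lam * ⟪ζ u, v⟫)
    (hsgn : 0 ≤ ⟪ζ u, EuclideanSpace.single j (1 : ℝ)⟫)
    (p ζN : ℕ → EuclideanSpace ℝ (Fin d))
    (hp : Tendsto p atTop (nhds u))
    (hζN : Tendsto ζN atTop (nhds (ζ u)))
    (hin : ∀ N : ℕ, 1 ≤ N →
      p N ∈ Λ ∧
      p N - ((N : ℝ))⁻¹ • EuclideanSpace.single j (1 : ℝ) ∈ Λ ∧
      p N + ((N : ℝ))⁻¹ • EuclideanSpace.single j (1 : ℝ) ∉ Λ) :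
    let H : EuclideanSpace ℝ (Fin d) → ℝ :=
      fun v => h v + lam * Set.indicator Λ (fun _ => (1 : ℝ)) v
    let ej : EuclideanSpace ℝ (Fin d) := EuclideanSpace.single j (1 : ℝ)
    Tendsto (fun N : ℕ =>
        (N : ℝ) * (|⟪ζN N, ej⟫| / N) * (H (p N + ((N : ℝ))⁻¹ • ej) - H (p N)) +
        (N : ℝ) * 1 * (H (p N - ((N : ℝ))⁻¹ • ej) - H (p N)))
      atTop (nhds (-lam * ⟪ζ u, ej⟫ - fderiv ℝ h u ej)) ∧
    -lam * ⟪ζ u, ej⟫ - fderiv ℝ h u ej = 0 :=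
  stmt13_general d j Λ ζ h lam hh u hbc hsgn p ζN hp hζN hin
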